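/- Energy conservation and asymptotic equipartition of energy for the free wave equation on ℝ^d (Fourier side): let g₀, g₁ ∈ L²(ℝ^d, ℂ) with ξ ↦ |ξ| g₀(ξ) also in L²(ℝ^d). Define the potential energy P(t) = ∫_{ℝ^d} | |ξ| cos(t|ξ|) g₀(ξ) + sin(t|ξ|) g₁(ξ) |² dξ and the kinetic energy K(t) = ∫_{ℝ^d} | −|ξ| sin(t|ξ|) g₀(ξ) + cos(t|ξ|) g₁(ξ) |² dξ. Then (i) for every t ∈ ℝ, P(t) + K(t) = E where E := ∫_{ℝ^d} ( |ξ|² |g₀(ξ)|² + |g₁(ξ)|² ) dξ, and (ii) P(t) → E/2 and K(t) → E/2 as |t| → ∞. -/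

import Mathlib

open MeasureTheory Filter Complex Topology ComplexConjugate

/-!
With `a = |ξ| g₀`, `b = g₁`, `θ = t|ξ|` and `W = (a − i b) · conj (a + i b) ∈ L¹`, the
potential and kinetic integrands are `(|a|² + |b|²)/2 ± Re (e^{2iθ} W)/2`. Their sum is
therefore constant, and equipartition reduces to `∫ e^{is|ξ|} W(ξ) dξ → 0` as `|s| → ∞`.
For a nonnegative integrable `f` in place of `W`, this integral is the characteristic function
of the image of `f dξ` under `ξ ↦ |ξ|`, a finite measure on `ℝ` that is absolutely continuous
by polar coordinates, so the Riemann–Lebesgue lemma applies; a general `W` is split into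
nonnegative parts.
-/

theorem tendsto_charFun_cocompact_of_absolutelyContinuous {ν : Measure ℝ} [SigmaFinite ν]
    (hν : ν ≪ volume) : Tendsto (charFun ν) (cocompact ℝ) (𝓝 0) := by
  have hscale : Tendsto (fun t : ℝ => -(2 * Real.pi)⁻¹ * t) (cocompact ℝ) (cocompact ℝ) :=
    tendsto_cocompact_mul_left₀ (by simp [Real.pi_ne_zero])
  refine ((Real.tendsto_integral_exp_smul_cocompact
    fun x => ((ν.rnDeriv volume x).toReal : ℂ)).comp hscale).congr fun t => ?_
  rw [Function.comp_apply, charFun_apply_real, ← integral_rnDeriv_smul hν]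
  refine integral_congr_ae (.of_forall fun x => ?_)
  have : 2 * Real.pi * -(x * (-(2 * Real.pi)⁻¹ * t)) = t * x := by field_simp
  simp only [Circle.smul_def, Real.fourierChar_apply, this, smul_eq_mul, Complex.real_smul]
  push_cast
  ring

theorem integrable_exp_mul_norm_mul {E : Type*} [NormedAddCommGroup E] [MeasurableSpace E]
    [OpensMeasurableSpace E] {μ : Measure E} (t : ℝ) {w : E → ℂ} (hw : Integrable w μ) :
    Integrable (fun ξ => exp (t * ‖ξ‖ * I) * w ξ) μ :=
  hw.bdd_mul (by fun_prop) (.of_forall fun ξ => by rw [← ofReal_mul, norm_exp_ofReal_mul_I])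

section
variable {E : Type*} [NormedAddCommGroup E] [NormedSpace ℝ E] [MeasurableSpace E] [BorelSpace E]
  [FiniteDimensional ℝ E] [Nontrivial E] (μ : Measure E) [μ.IsAddHaarMeasure]

theorem addHaar_preimage_norm_eq_zero {s : Set ℝ} (hs : MeasurableSet s) (h : volume s = 0) :
    μ ((‖·‖) ⁻¹' s) = 0 := by
  have hzero : (fun y : ℝ => y ^ (Module.finrank ℝ E - 1) • s.indicator (1 : ℝ → ℝ) y)
      =ᵐ[volume.restrict (Set.Ioi 0)] 0 :=
    ae_restrict_of_ae <| (measure_eq_zero_iff_ae_notMem.1 h).mono fun y hy => by simp [hy]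
  have hint : Integrable (((‖·‖) ⁻¹' s).indicator (1 : E → ℝ)) μ :=
    (integrable_fun_norm_addHaar μ).2 ((integrable_zero _ _ _).congr hzero.symm)
  have hfin : μ ((‖·‖) ⁻¹' s) ≠ ⊤ :=
    ((integrableOn_const_iff (C := (1 : ℝ))).1
      ((integrable_indicator_iff (measurable_norm hs)).1 hint) |>.resolve_left (by simp)).ne
  have hintegral : ∫ x, ((‖·‖) ⁻¹' s).indicator (1 : E → ℝ) x ∂μ = 0 := by
    rw [show ((‖·‖) ⁻¹' s).indicator (1 : E → ℝ) = (s.indicator 1 ‖·‖) from rfl,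
      integral_fun_norm_addHaar, integral_congr_ae hzero]
    simp
  rw [integral_indicator_one (measurable_norm hs)] at hintegral
  exact (measureReal_eq_zero_iff hfin).1 hintegral

theorem map_norm_absolutelyContinuous_volume : μ.map (‖·‖) ≪ volume :=
  .mk fun s hs h => by
    rw [Measure.map_apply measurable_norm hs]
    exact addHaar_preimage_norm_eq_zero μ hs h

theorem tendsto_integral_exp_mul_norm_mul_ofReal_of_nonneg {f : E → ℝ} (hf : Integrable f μ)
    (hf₀ : 0 ≤ f) :
    Tendsto (fun t : ℝ => ∫ ξ, exp (t * ‖ξ‖ * I) * f ξ ∂μ)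
      (cocompact ℝ) (𝓝 0) := by
  have : IsFiniteMeasure (μ.withDensity fun ξ => ENNReal.ofReal (f ξ)) :=
    isFiniteMeasure_withDensity_ofReal hf.2
  have hν : (μ.withDensity fun ξ => ENNReal.ofReal (f ξ)).map (‖·‖) ≪ volume :=
    ((withDensity_absolutelyContinuous μ _).map measurable_norm).trans
      (map_norm_absolutelyContinuous_volume μ)
  refine (tendsto_charFun_cocompact_of_absolutelyContinuous hν).congr fun t => ?_
  rw [charFun_apply_real, integral_map measurable_norm.aemeasurable (by fun_prop),
    integral_withDensity_eq_integral_toReal_smul₀ hf.1.aemeasurable.ennreal_ofReal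
      (.of_forall fun _ => ENNReal.ofReal_lt_top)]
  refine integral_congr_ae (.of_forall fun ξ => ?_)
  dsimp only
  rw [ENNReal.toReal_ofReal (hf₀ ξ), real_smul, mul_comm]

theorem tendsto_integral_exp_mul_norm_mul_ofReal {f : E → ℝ} (hf : Integrable f μ) :
    Tendsto (fun t : ℝ => ∫ ξ, exp (t * ‖ξ‖ * I) * f ξ ∂μ)
      (cocompact ℝ) (𝓝 0) := by
  have hpos : Integrable (fun ξ => max (f ξ) 0) μ := hf.pos_part
  have hneg : Integrable (fun ξ => max (-f ξ) 0) μ := hf.neg.pos_part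
  have hpos' : Integrable (fun ξ => ((max (f ξ) 0 : ℝ) : ℂ)) μ := hpos.ofReal
  have hneg' : Integrable (fun ξ => ((max (-f ξ) 0 : ℝ) : ℂ)) μ := hneg.ofReal
  have h := (tendsto_integral_exp_mul_norm_mul_ofReal_of_nonneg μ hpos
    fun _ => le_max_right _ _).sub
    (tendsto_integral_exp_mul_norm_mul_ofReal_of_nonneg μ hneg fun _ => le_max_right _ _)
  rw [sub_zero] at h
  refine h.congr fun t => ?_
  rw [← integral_sub (integrable_exp_mul_norm_mul t hpos')
    (integrable_exp_mul_norm_mul t hneg')]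
  refine integral_congr_ae (.of_forall fun ξ => ?_)
  simp only [← mul_sub, ← ofReal_sub, max_zero_sub_max_neg_zero_eq_self]

theorem tendsto_integral_exp_mul_norm_mul {w : E → ℂ} (hw : Integrable w μ) :
    Tendsto (fun t : ℝ => ∫ ξ, exp (t * ‖ξ‖ * I) * w ξ ∂μ)
      (cocompact ℝ) (𝓝 0) := by
  have hre : Integrable (fun ξ => (w ξ).re) μ := hw.re
  have him : Integrable (fun ξ => (w ξ).im) μ := hw.im
  have hre' : Integrable (fun ξ => ((w ξ).re : ℂ)) μ := hre.ofReal
  have him' : Integrable (fun ξ => ((w ξ).im : ℂ)) μ := him.ofReal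
  have h := (tendsto_integral_exp_mul_norm_mul_ofReal μ hre).add
    ((tendsto_integral_exp_mul_norm_mul_ofReal μ him).mul_const I)
  rw [zero_mul, add_zero] at h
  refine h.congr fun t => ?_
  rw [← integral_mul_const, ← integral_add (integrable_exp_mul_norm_mul t hre')
    ((integrable_exp_mul_norm_mul t him').mul_const I)]
  refine integral_congr_ae (.of_forall fun ξ => ?_)
  dsimp only
  conv_rhs => rw [← re_add_im (w ξ)]
  ring

end

theorem norm_cos_mul_add_sin_mul_sq (θ : ℝ) (a b : ℂ) :
    ‖(Real.cos θ : ℂ) * a + (Real.sin θ : ℂ) * b‖ ^ 2 =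
      (‖a‖ ^ 2 + ‖b‖ ^ 2) / 2 +
        (exp (2 * θ * I) * ((a - I * b) * conj (a + I * b))).re / 2 := by
  have hexp : exp (2 * θ * I) = (Real.cos θ + Real.sin θ * I) ^ 2 := by
    rw [show 2 * (θ : ℂ) * I = θ * I + θ * I by ring, exp_add, exp_mul_I, ← ofReal_cos,
      ← ofReal_sin, sq]
  simp only [Complex.sq_norm]
  simp only [hexp, normSq_apply, add_re, add_im, sub_re, sub_im, mul_re, mul_im, pow_two,
    ofReal_re, ofReal_im, I_re, I_im, conj_re, conj_im]
  linear_combination (a.re ^ 2 + a.im ^ 2 + b.re ^ 2 + b.im ^ 2) / 2 * Real.sin_sq_add_cos_sq θ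

section
variable {α : Type*} [MeasurableSpace α] {μ : Measure α} {θ : α → ℝ} {a b : α → ℂ}

theorem integrable_sub_I_mul_mul_conj_add_I_mul (ha : MemLp a 2 μ) (hb : MemLp b 2 μ) :
    Integrable (fun x => (a x - I * b x) * conj (a x + I * b x)) μ :=
  (ha.sub (hb.const_mul I)).integrable_mul (ha.add (hb.const_mul I)).star

theorem integral_norm_cos_mul_add_sin_mul_sq (hθ : AEMeasurable θ μ) (ha : MemLp a 2 μ)
    (hb : MemLp b 2 μ) :
    ∫ x, ‖(Real.cos (θ x) : ℂ) * a x + (Real.sin (θ x) : ℂ) * b x‖ ^ 2 ∂μ =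
      (∫ x, ‖a x‖ ^ 2 + ‖b x‖ ^ 2 ∂μ) / 2 +
        (∫ x, exp (2 * θ x * I) * ((a x - I * b x) * conj (a x + I * b x)) ∂μ).re / 2 := by
  have hE : Integrable (fun x => ‖a x‖ ^ 2 + ‖b x‖ ^ 2) μ :=
    ha.norm.integrable_sq.add hb.norm.integrable_sq
  have hEW : Integrable
      (fun x => exp (2 * θ x * I) * ((a x - I * b x) * conj (a x + I * b x))) μ :=
    (integrable_sub_I_mul_mul_conj_add_I_mul ha hb).bdd_mul (by fun_prop) (.of_forall fun x => by
      rw [← ofReal_ofNat, ← ofReal_mul, norm_exp_ofReal_mul_I])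
  have hEWre : Integrable
      (fun x => (exp (2 * θ x * I) * ((a x - I * b x) * conj (a x + I * b x))).re) μ := hEW.re
  simp_rw [norm_cos_mul_add_sin_mul_sq]
  rw [integral_add (hE.div_const 2) (hEWre.div_const 2), integral_div, integral_div]
  congr 2
  exact integral_re hEW

theorem integral_norm_neg_sin_mul_add_cos_mul_sq (hθ : AEMeasurable θ μ) (ha : MemLp a 2 μ)
    (hb : MemLp b 2 μ) :
    ∫ x, ‖-((Real.sin (θ x) : ℂ) * a x) + (Real.cos (θ x) : ℂ) * b x‖ ^ 2 ∂μ =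
      (∫ x, ‖a x‖ ^ 2 + ‖b x‖ ^ 2 ∂μ) / 2 -
        (∫ x, exp (2 * θ x * I) * ((a x - I * b x) * conj (a x + I * b x)) ∂μ).re / 2 := by
  have hW : ∀ x, (b x - I * -a x) * conj (b x + I * -a x) =
      -((a x - I * b x) * conj (a x + I * b x)) := fun x => by
    simp only [map_add, map_mul, map_neg, conj_I]
    linear_combination (a x * conj (a x) + b x * conj (b x)) * I_sq
  calc ∫ x, ‖-((Real.sin (θ x) : ℂ) * a x) + (Real.cos (θ x) : ℂ) * b x‖ ^ 2 ∂μ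
    _ = ∫ x, ‖(Real.cos (θ x) : ℂ) * b x + (Real.sin (θ x) : ℂ) * -a x‖ ^ 2 ∂μ := by
        congr with x
        ring_nf
    _ = _ := integral_norm_cos_mul_add_sin_mul_sq hθ hb ha.neg
    _ = _ := by
        simp only [hW, norm_neg, add_comm (‖b _‖ ^ 2)]
        simp only [mul_neg, integral_neg, neg_re]
        ring
end

theorem free_wave_equipartition_of_energy_general (d : ℕ) (hd : 1 ≤ d)
    (g₀ g₁ : EuclideanSpace ℝ (Fin d) → ℂ)
    (h₁ : MemLp g₁ 2 volume)
    (h₀' : MemLp (fun ξ => (‖ξ‖ : ℂ) * g₀ ξ) 2 volume) :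
    (∀ t : ℝ,
      (∫ ξ, ‖(‖ξ‖ : ℂ) * (Real.cos (t * ‖ξ‖) : ℂ) * g₀ ξ
          + (Real.sin (t * ‖ξ‖) : ℂ) * g₁ ξ‖ ^ 2) +
      (∫ ξ, ‖-((‖ξ‖ : ℂ) * (Real.sin (t * ‖ξ‖) : ℂ) * g₀ ξ)
          + (Real.cos (t * ‖ξ‖) : ℂ) * g₁ ξ‖ ^ 2) =
      ∫ ξ, (‖ξ‖ ^ 2 * ‖g₀ ξ‖ ^ 2 + ‖g₁ ξ‖ ^ 2)) ∧
    Tendsto (fun t : ℝ =>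
        ∫ ξ, ‖(‖ξ‖ : ℂ) * (Real.cos (t * ‖ξ‖) : ℂ) * g₀ ξ
          + (Real.sin (t * ‖ξ‖) : ℂ) * g₁ ξ‖ ^ 2)
      (cocompact ℝ)
      (nhds ((∫ ξ, (‖ξ‖ ^ 2 * ‖g₀ ξ‖ ^ 2 + ‖g₁ ξ‖ ^ 2)) / 2)) ∧
    Tendsto (fun t : ℝ =>
        ∫ ξ, ‖-((‖ξ‖ : ℂ) * (Real.sin (t * ‖ξ‖) : ℂ) * g₀ ξ)
          + (Real.cos (t * ‖ξ‖) : ℂ) * g₁ ξ‖ ^ 2)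
      (cocompact ℝ)
      (nhds ((∫ ξ, (‖ξ‖ ^ 2 * ‖g₀ ξ‖ ^ 2 + ‖g₁ ξ‖ ^ 2)) / 2)) := by
  have : Nonempty (Fin d) := ⟨⟨0, hd⟩⟩
  set E := ∫ ξ, (‖ξ‖ ^ 2 * ‖g₀ ξ‖ ^ 2 + ‖g₁ ξ‖ ^ 2)
  set a : EuclideanSpace ℝ (Fin d) → ℂ := fun ξ => (‖ξ‖ : ℂ) * g₀ ξ
  set R : ℝ → ℝ := fun t => (∫ ξ,
    exp (2 * (t * ‖ξ‖ : ℝ) * I) * ((a ξ - I * g₁ ξ) * conj (a ξ + I * g₁ ξ))).re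
  have hE : ∫ ξ, ‖a ξ‖ ^ 2 + ‖g₁ ξ‖ ^ 2 = E := by
    simp only [E, a, norm_mul, norm_real, norm_norm, mul_pow]
  have hθ (t : ℝ) : AEMeasurable (fun ξ : EuclideanSpace ℝ (Fin d) => t * ‖ξ‖) := by
    fun_prop
  have hP (t : ℝ) : ∫ ξ, ‖(‖ξ‖ : ℂ) * (Real.cos (t * ‖ξ‖) : ℂ) * g₀ ξ
      + (Real.sin (t * ‖ξ‖) : ℂ) * g₁ ξ‖ ^ 2 = E / 2 + R t / 2 := by
    rw [← hE, ← integral_norm_cos_mul_add_sin_mul_sq (hθ t) h₀' h₁]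
    simp only [a, mul_left_comm, mul_assoc]
  have hK (t : ℝ) : ∫ ξ, ‖-((‖ξ‖ : ℂ) * (Real.sin (t * ‖ξ‖) : ℂ) * g₀ ξ)
      + (Real.cos (t * ‖ξ‖) : ℂ) * g₁ ξ‖ ^ 2 = E / 2 - R t / 2 := by
    rw [← hE, ← integral_norm_neg_sin_mul_add_cos_mul_sq (hθ t) h₀' h₁]
    simp only [a, mul_left_comm, mul_assoc]
  have hR : Tendsto R (cocompact ℝ) (𝓝 0) := by
    have h := (tendsto_integral_exp_mul_norm_mul volume
      (integrable_sub_I_mul_mul_conj_add_I_mul h₀' h₁)).comp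
      (tendsto_cocompact_mul_left₀ two_ne_zero)
    refine (continuous_re.tendsto 0).comp h |>.congr fun t => ?_
    simp only [R, Function.comp_apply, ofReal_mul, ofReal_ofNat, mul_assoc]
  refine ⟨fun t => by rw [hP, hK]; ring, ?_, ?_⟩
  · simp_rw [hP]
    simpa using tendsto_const_nhds.add (hR.div_const 2)
  · simp_rw [hK]
    simpa using tendsto_const_nhds.sub (hR.div_const 2)

/-- **Energy conservation and asymptotic equipartition of energy for the free wave equation
on `ℝ^d` (Fourier side).** For `g₀, g₁ ∈ L²(ℝ^d, ℂ)` with `ξ ↦ |ξ| g₀(ξ)` also in `L²`,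
with potential energy `P(t) = ∫ ||ξ| cos(t|ξ|) g₀(ξ) + sin(t|ξ|) g₁(ξ)|² dξ` and kinetic
energy `K(t) = ∫ |−|ξ| sin(t|ξ|) g₀(ξ) + cos(t|ξ|) g₁(ξ)|² dξ`, we have
`P(t) + K(t) = E := ∫ (|ξ|²|g₀(ξ)|² + |g₁(ξ)|²) dξ` for all `t`, and `P(t) → E/2`,
`K(t) → E/2` as `|t| → ∞`. -/
theorem free_wave_equipartition_of_energy (d : ℕ) (hd : 1 ≤ d)
    (g₀ g₁ : EuclideanSpace ℝ (Fin d) → ℂ)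
    (h₀ : MemLp g₀ 2 volume) (h₁ : MemLp g₁ 2 volume)
    (h₀' : MemLp (fun ξ => (‖ξ‖ : ℂ) * g₀ ξ) 2 volume) :
    (∀ t : ℝ,
      (∫ ξ, ‖(‖ξ‖ : ℂ) * (Real.cos (t * ‖ξ‖) : ℂ) * g₀ ξ
          + (Real.sin (t * ‖ξ‖) : ℂ) * g₁ ξ‖ ^ 2) +
      (∫ ξ, ‖-((‖ξ‖ : ℂ) * (Real.sin (t * ‖ξ‖) : ℂ) * g₀ ξ)
          + (Real.cos (t * ‖ξ‖) : ℂ) * g₁ ξ‖ ^ 2) =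
      ∫ ξ, (‖ξ‖ ^ 2 * ‖g₀ ξ‖ ^ 2 + ‖g₁ ξ‖ ^ 2)) ∧
    Tendsto (fun t : ℝ =>
        ∫ ξ, ‖(‖ξ‖ : ℂ) * (Real.cos (t * ‖ξ‖) : ℂ) * g₀ ξ
          + (Real.sin (t * ‖ξ‖) : ℂ) * g₁ ξ‖ ^ 2)
      (cocompact ℝ)
      (nhds ((∫ ξ, (‖ξ‖ ^ 2 * ‖g₀ ξ‖ ^ 2 + ‖g₁ ξ‖ ^ 2)) / 2)) ∧
    Tendsto (fun t : ℝ =>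
        ∫ ξ, ‖-((‖ξ‖ : ℂ) * (Real.sin (t * ‖ξ‖) : ℂ) * g₀ ξ)
          + (Real.cos (t * ‖ξ‖) : ℂ) * g₁ ξ‖ ^ 2)
      (cocompact ℝ)
      (nhds ((∫ ξ, (‖ξ‖ ^ 2 * ‖g₀ ξ‖ ^ 2 + ‖g₁ ξ‖ ^ 2)) / 2)) :=
  free_wave_equipartition_of_energy_general d hd g₀ g₁ h₁ h₀'
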